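/- arXiv:2105.10418 — 5 statements merged into one kernel-verified Lean document; each statement's English description precedes it below -/
import Mathlib

section
/- (Ulam's theorem.) Assume the continuum hypothesis. Let X be a set of cardinality ℵ₁ (equivalently, of cardinality continuum). Then every finite countably additive measure defined on all subsets of X that vanishes on every one-point set is identically zero; i.e., if μ is a finite measure on the measurable space (X, ⊤) (power-set σ-algebra) with μ({x}) = 0 for all x ∈ X, then μ = 0. -/
open MeasureTheory Set

/-- A finitely additive (signed) measure on all subsets of `X`. -/
def IsFA {X : Type*} (μ : Set X → ℝ) : Prop :=
  μ ∅ = 0 ∧ ∀ A B : Set X, Disjoint A B → μ (A ∪ B) = μ A + μ B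

/-- A nonnegative finitely additive measure on all subsets of `X`. -/
def IsNNFA {X : Type*} (μ : Set X → ℝ) : Prop :=
  IsFA μ ∧ ∀ E : Set X, 0 ≤ μ E

/-- A (bounded, nonnegative) countably additive measure on all subsets of `X`:
a nonnegative finitely additive measure which is countably additive. -/
def IsCA {X : Type*} (μ : Set X → ℝ) : Prop :=
  IsNNFA μ ∧ ∀ E : ℕ → Set X, Pairwise (Function.onFun Disjoint E) →
    HasSum (fun n => μ (E n)) (μ (⋃ n, E n))

/-- A purely finitely additive measure: every countably additive measure
dominated by it is identically zero. -/
def IsPFA {X : Type*} (μ : Set X → ℝ) : Prop :=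
  IsNNFA μ ∧ ∀ ν : Set X → ℝ, IsCA ν → (∀ E : Set X, ν E ≤ μ E) → ν = 0

/-- `X` has the Ulam property: every countably additive measure on all subsets of `X`
vanishing on every singleton is identically zero. -/
def UlamProperty (X : Type*) : Prop :=
  ∀ ν : Set X → ℝ, IsCA ν → (∀ x : X, ν {x} = 0) → ν = 0

/-- Ulam's theorem: assuming the continuum hypothesis, any finite
countably additive measure on the power set of a set of cardinality ℵ₁ which
vanishes on every singleton is identically zero. -/
theorem ulam_theorem (CH : Cardinal.continuum = Cardinal.aleph 1)
    (X : Type) (hX : Cardinal.mk X = Cardinal.aleph 1)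
    (μ : @MeasureTheory.Measure X ⊤)
    (hfin : μ Set.univ ≠ ⊤)
    (hsing : ∀ x : X, μ {x} = 0) :
    μ = 0 := by
  classical
  by_contra hμ
  -- with the power-set σ-algebra, every set is measurable
  letI : MeasurableSpace X := ⊤
  have hmeas : ∀ s : Set X, MeasurableSet s := fun s => trivial
  haveI : NullSingletonClass μ := ⟨hsing⟩
  have hpos : 0 < μ Set.univ := by
    rcases eq_or_lt_of_le ((zero_le : 0 ≤ μ Set.univ)) with h | h
    · exact absurd (MeasureTheory.Measure.measure_univ_eq_zero.mp h.symm) hμ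
    · exact h
  -- transfer a well-order of type ω₁ to X
  have hY : Cardinal.mk X = Cardinal.mk ((Cardinal.aleph 1).ord.ToType) := by
    rw [Cardinal.mk_toType, Cardinal.card_ord, hX]
  obtain ⟨e⟩ := Cardinal.eq.mp hY
  -- each initial segment is countable
  have hIio : ∀ y : X, Set.Countable {x : X | e x < e y} := by
    intro y
    have h1 : Set.Countable (Set.Iio (e y)) := by
      rw [Cardinal.countable_iff_lt_aleph_one]
      exact Cardinal.mk_Iio_ord_toType (e y)
    have : {x : X | e x < e y} = e ⁻¹' (Set.Iio (e y)) := rfl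
    rw [this]
    exact (h1.preimage e.injective)
  -- choose injections of initial segments into ℕ
  have hg : ∀ y : X, ∃ g : {x : X | e x < e y} → ℕ, Function.Injective g := by
    intro y
    haveI := (hIio y).to_subtype
    exact exists_injective_nat _
  choose g hginj using hg
  -- the Ulam matrix
  set F : X → X → ℕ := fun y x => if h : e x < e y then g y ⟨x, h⟩ else 0 with hF
  set A : X → ℕ → Set X := fun x n => {y | e x < e y ∧ F y x = n} with hA
  -- rows with the same index are pairwise disjoint
  have hdisj : ∀ n : ℕ, Pairwise (Function.onFun Disjoint (fun x => A x n)) := by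
    intro n x x' hxx'
    rw [Function.onFun, Set.disjoint_left]
    rintro y ⟨hy1, hy2⟩ ⟨hy1', hy2'⟩
    apply hxx'
    have e1 : g y ⟨x, hy1⟩ = n := by simpa [hF, hy1] using hy2
    have e2 : g y ⟨x', hy1'⟩ = n := by simpa [hF, hy1'] using hy2'
    have := hginj y (e1.trans e2.symm)
    exact congrArg Subtype.val this
  -- each column union has full measure
  have hcol : ∀ x : X, μ (⋃ n, A x n) = μ Set.univ := by
    intro x
    have hU : (⋃ n, A x n) = {y | e x < e y} := by
      ext y
      simp only [Set.mem_iUnion, hA, Set.mem_setOf_eq]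
      constructor
      · rintro ⟨n, h, _⟩; exact h
      · intro h; exact ⟨F y x, h, rfl⟩
    have hcompl : Set.Countable {y : X | e x < e y}ᶜ := by
      have : {y : X | e x < e y}ᶜ ⊆ {y : X | e y < e x} ∪ {x} := by
        intro y hy
        simp only [Set.mem_compl_iff, Set.mem_setOf_eq, not_lt] at hy
        rcases lt_or_eq_of_le hy with h | h
        · exact Or.inl h
        · exact Or.inr (by simpa using e.injective h)
      exact Set.Countable.mono this ((hIio x).union (Set.countable_singleton x))
    have h0 : μ ({y : X | e x < e y}ᶜ) = 0 := hcompl.measure_zero μ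
    rw [hU]
    have h1 : μ Set.univ ≤ μ {y : X | e x < e y} := by
      calc μ Set.univ = μ ({y : X | e x < e y} ∪ {y : X | e x < e y}ᶜ) := by
            rw [Set.union_compl_self]
        _ ≤ μ {y : X | e x < e y} + μ ({y : X | e x < e y}ᶜ) := measure_union_le _ _
        _ = μ {y : X | e x < e y} := by rw [h0, add_zero]
    exact le_antisymm (measure_mono (Set.subset_univ _)) h1
  -- for each x, some entry in its column has positive measure
  have hex : ∀ x : X, ∃ n : ℕ, 0 < μ (A x n) := by
    intro x
    by_contra h
    push_neg at h
    simp only [nonpos_iff_eq_zero] at h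
    have : μ (⋃ n, A x n) = 0 := measure_iUnion_null h
    rw [hcol x] at this
    exact absurd this (ne_of_gt hpos)
  -- only countably many positive entries in each row
  have hcnt : ∀ n : ℕ, Set.Countable {x : X | 0 < μ (A x n)} := by
    intro n
    apply MeasureTheory.Measure.countable_meas_pos_of_disjoint_of_meas_iUnion_ne_top μ
      (fun x => hmeas _) (hdisj n)
    intro h
    exact hfin (top_unique (h ▸ measure_mono (Set.subset_univ _)))
  -- hence X is countable, contradiction
  have hXcnt : Set.Countable (Set.univ : Set X) := by
    have : (Set.univ : Set X) ⊆ ⋃ n : ℕ, {x : X | 0 < μ (A x n)} := by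
      intro x _
      obtain ⟨n, hn⟩ := hex x
      exact Set.mem_iUnion.mpr ⟨n, hn⟩
    exact Set.Countable.mono this (Set.countable_iUnion hcnt)
  have : Cardinal.mk X < Cardinal.aleph 1 := by
    haveI : Countable X := Set.countable_univ_iff.mp hXcnt
    exact lt_of_le_of_lt Cardinal.mk_le_aleph0 Cardinal.aleph0_lt_aleph_one
  rw [hX] at this
  exact lt_irrefl _ this
end

section
/- Let X be a set with the Ulam property. Then every nonzero countably additive measure μ on X is atomic: the set D = {x ∈ X : μ({x}) > 0} is nonempty and countable (finite or countably infinite), μ(X \ D) = 0 (so μ(D) = μ(X)), and μ(E) = Σ_{x ∈ D ∩ E} μ({x}) for every E ⊆ X. -/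
open MeasureTheory Set

/-- on a set with the Ulam property, every nonzero countably additive
measure is atomic: its set of atoms D is nonempty and countable, the complement of D
is null, μ(D) = μ(X), and μ(E) is the sum of the masses of the atoms in E. -/
theorem ca_measure_atomic {X : Type*} (hU : UlamProperty X)
    (μ : Set X → ℝ) (hμ : IsCA μ) (hne : μ ≠ 0) :
    ({x : X | 0 < μ {x}}).Nonempty ∧
    ({x : X | 0 < μ {x}}).Countable ∧
    μ (Set.univ \ {x : X | 0 < μ {x}}) = 0 ∧
    μ {x : X | 0 < μ {x}} = μ Set.univ ∧
    ∀ E : Set X,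
      HasSum (fun y : ({x : X | 0 < μ {x}} ∩ E : Set X) => μ {(y : X)}) (μ E) := by
  classical
  obtain ⟨⟨⟨h0, hadd⟩, hpos⟩, hca⟩ := hμ
  set D := {x : X | 0 < μ {x}} with hDdef
  -- a point outside D has null singleton
  have hnull : ∀ x : X, x ∉ D → μ {x} = 0 := fun x hx =>
    le_antisymm (not_lt.mp hx) (hpos _)
  -- monotone
  have hmono : ∀ A B : Set X, A ⊆ B → μ A ≤ μ B := by
    intro A B hAB
    have h : μ B = μ A + μ (B \ A) := by
      have := hadd A (B \ A) disjoint_sdiff_right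
      rwa [union_diff_cancel hAB] at this
    linarith [hpos (B \ A)]
  -- finite additivity on finsets
  have hfin : ∀ s : Finset X, μ ↑s = ∑ x ∈ s, μ {x} := by
    intro s
    induction s using Finset.induction with
    | empty => simpa using h0
    | insert _ _ hx ih =>
      rename_i a s
      rw [Finset.coe_insert, Set.insert_eq,
        hadd _ _ (Set.disjoint_singleton_left.mpr (by simpa using hx)), ih,
        Finset.sum_insert hx]
  -- the diff measure vanishes by Ulam
  have hlam : (fun E : Set X => μ (E \ D)) = 0 := by
    apply hU
    · refine ⟨⟨⟨by simpa using h0, ?_⟩, fun E => hpos _⟩, ?_⟩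
      · intro A B hAB
        show μ ((A ∪ B) \ D) = μ (A \ D) + μ (B \ D)
        rw [union_diff_distrib]
        exact hadd _ _ (hAB.mono diff_subset diff_subset)
      · intro E hE
        have h1 : Pairwise (Function.onFun Disjoint (fun n => E n \ D)) :=
          fun i j hij => (hE hij).mono diff_subset diff_subset
        have h2 := hca (fun n => E n \ D) h1
        simpa [iUnion_diff] using h2
    · intro x
      by_cases hx : x ∈ D
      · rw [diff_eq_empty.mpr (singleton_subset_iff.mpr hx), h0]
      · rw [show ({x} : Set X) \ D = {x} by ext y; simp; rintro rfl; exact hx]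
        exact hnull x hx
  have hlam' : ∀ E : Set X, μ (E \ D) = 0 := fun E => congrFun hlam E
  -- μ E = μ (E ∩ D)
  have hED : ∀ E : Set X, μ E = μ (E ∩ D) := by
    intro E
    have hd : Disjoint (E ∩ D) (E \ D) := by
      rw [Set.disjoint_left]; rintro x ⟨-, hx⟩ ⟨-, hx'⟩; exact hx' hx
    have := hadd _ _ hd
    rw [Set.inter_union_diff] at this
    rw [this, hlam' E, add_zero]
  -- D nonempty
  have hDne : D.Nonempty := by
    by_contra h
    apply hne
    apply hU μ ⟨⟨⟨h0, hadd⟩, hpos⟩, hca⟩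
    intro x
    exact hnull x (fun hx => h ⟨x, hx⟩)
  -- D countable
  have hDc : D.Countable := by
    have hsub : D ⊆ ⋃ n : ℕ, {x : X | 1 / ((n : ℝ) + 1) ≤ μ {x}} := by
      intro x hx
      obtain ⟨n, hn⟩ := exists_nat_one_div_lt (show (0:ℝ) < μ {x} from hx)
      exact mem_iUnion.mpr ⟨n, le_of_lt hn⟩
    refine Set.Countable.mono hsub (countable_iUnion fun n => Set.Finite.countable ?_)
    by_contra hinf
    have hinf : Set.Infinite {x : X | 1 / ((n : ℝ) + 1) ≤ μ {x}} := hinf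
    obtain ⟨k, hk⟩ := exists_nat_gt (((n : ℝ) + 1) * μ Set.univ)
    obtain ⟨t, ht, htc⟩ := hinf.exists_subset_card_eq k
    have hn1 : (0 : ℝ) < (n : ℝ) + 1 := by positivity
    have h1 : (k : ℝ) * (1 / ((n : ℝ) + 1)) ≤ ∑ x ∈ t, μ {x} := by
      have := Finset.card_nsmul_le_sum t (fun x => μ {x}) (1 / ((n : ℝ) + 1))
        (fun x hx => ht hx)
      rw [nsmul_eq_mul, htc] at this
      exact this
    have h2 : ∑ x ∈ t, μ {x} ≤ μ Set.univ := by
      rw [← hfin]; exact hmono _ _ (subset_univ _)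
    rw [mul_one_div, div_le_iff₀ hn1] at h1
    nlinarith [h1, h2, hn1, hk]
  refine ⟨hDne, hDc, hlam' Set.univ, by rw [hED Set.univ, univ_inter], ?_⟩
  intro E
  have hμE : μ E = μ (D ∩ E) := by rw [hED E, inter_comm]
  have hSc : (D ∩ E).Countable := hDc.mono inter_subset_left
  rcases (D ∩ E).finite_or_infinite with hf | hinf
  · obtain ⟨s, hs⟩ : ∃ s : Finset X, ↑s = D ∩ E := ⟨hf.toFinset, hf.coe_toFinset⟩
    rw [← hs]
    have := hasSum_fintype (fun y : (↑s : Set X) => μ {(y : X)})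
    convert this using 1
    rw [hμE, ← hs, hfin]
    exact (Finset.sum_finset_coe (fun x => μ {x}) s).symm
  · haveI : Countable ↥(D ∩ E) := hSc.to_subtype
    haveI : Infinite ↥(D ∩ E) := hinf.to_subtype
    obtain ⟨den⟩ := nonempty_denumerable ↥(D ∩ E)
    set e : ↥(D ∩ E) ≃ ℕ := Denumerable.eqv ↥(D ∩ E) with he
    set F : ℕ → Set X := fun n => {(e.symm n : X)} with hF
    have hdisj : Pairwise (Function.onFun Disjoint F) := by
      intro i j hij
      simp only [hF, Function.onFun, Set.disjoint_singleton]
      exact fun h => hij (e.symm.injective (Subtype.coe_injective h))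
    have hUn : (⋃ n, F n) = D ∩ E := by
      ext x
      simp only [hF, mem_iUnion, mem_singleton_iff]
      constructor
      · rintro ⟨n, rfl⟩; exact (e.symm n).2
      · intro hx; exact ⟨e ⟨x, hx⟩, by simp⟩
    have h2 := hca F hdisj
    rw [hUn, ← hμE] at h2
    exact (Equiv.hasSum_iff e.symm).mp h2

example : True := trivial
end

section
/- Let X be a set with the Ulam property. A nonnegative finitely additive measure μ on X is purely finitely additive if and only if μ({x}) = 0 for all x ∈ X. -/
open MeasureTheory Set

/-- on a set with the Ulam property, a nonnegative finitely additive
measure is purely finitely additive iff it vanishes on every singleton. -/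
theorem pfa_iff_vanishes_on_singletons {X : Type*} (hU : UlamProperty X)
    (μ : Set X → ℝ) (hμ : IsNNFA μ) :
    IsPFA μ ↔ ∀ x : X, μ {x} = 0 := by
  obtain ⟨⟨hz, hadd⟩, hnn⟩ := hμ
  have mono : ∀ A B : Set X, A ⊆ B → μ A ≤ μ B := by
    intro A B hAB
    have h : μ B = μ A + μ (B \ A) := by
      rw [← hadd A (B \ A) disjoint_sdiff_right, union_diff_cancel hAB]
    linarith [hnn (B \ A)]
  constructor
  · rintro ⟨-, hP⟩ x
    classical
    set ν : Set X → ℝ := fun E => if x ∈ E then μ {x} else 0 with hν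
    have hca : IsCA ν := by
      refine ⟨⟨⟨by simp [hν], ?_⟩, ?_⟩, ?_⟩
      · intro A B hAB
        simp only [hν, mem_union]
        by_cases hA : x ∈ A
        · have hB : x ∉ B := fun hB => (hAB.le_bot ⟨hA, hB⟩ : x ∈ (⊥ : Set X)).elim
          simp [hA, hB]
        · by_cases hB : x ∈ B <;> simp [hA, hB]
      · intro E; simp only [hν]; split
        · exact hnn {x}
        · exact le_refl 0
      · intro E hE
        by_cases hx : x ∈ ⋃ n, E n
        · obtain ⟨n₀, hn₀⟩ := mem_iUnion.1 hx
          have heq : (fun n => ν (E n)) = fun n => if n = n₀ then μ {x} else 0 := by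
            funext n
            by_cases hn : n = n₀
            · subst hn; simp [hν, hn₀]
            · have hxn : x ∉ E n := fun hxn =>
                ((hE hn).le_bot ⟨hxn, hn₀⟩ : x ∈ (⊥ : Set X)).elim
              simp [hν, hxn, hn]
          rw [heq]
          have : ν (⋃ n, E n) = μ {x} := by simp [hν, hx]
          rw [this]
          exact hasSum_ite_eq n₀ (μ {x})
        · have heq : (fun n => ν (E n)) = fun _ => (0 : ℝ) := by
            funext n
            have hxn : x ∉ E n := fun hxn => hx (mem_iUnion.2 ⟨n, hxn⟩)
            simp [hν, hxn]
          rw [heq]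
          have : ν (⋃ n, E n) = 0 := by simp [hν, hx]
          rw [this]
          exact hasSum_zero
    have hle : ∀ E : Set X, ν E ≤ μ E := by
      intro E; simp only [hν]; split
      · exact mono {x} E (singleton_subset_iff.2 ‹_›)
      · exact hnn E
    have h0 := hP ν hca hle
    have : ν {x} = 0 := by rw [h0]; rfl
    simpa [hν] using this
  · intro hsing
    refine ⟨⟨⟨hz, hadd⟩, hnn⟩, ?_⟩
    intro ν hca hle
    apply hU ν hca
    intro x
    have h1 := hle {x}
    have h2 := hca.1.2 {x}
    linarith [hsing x]
end

section
/- Let X be any set and let P be a finitely additive Markov kernel on X. Then there exists a unique pair of functions P_ca, P_pfa assigning to each x ∈ X set functions P_ca(x,·), P_pfa(x,·) : Set X → ℝ such that: for every x ∈ X, P_ca(x,·) is a countably additive measure, P_pfa(x,·) is a nonnegative finitely additive measure that is purely finitely additive, and P(x,E) = P_ca(x,E) + P_pfa(x,E) for all E ⊆ X. Moreover, for every x ∈ X and E ⊆ X one has 0 ≤ P_ca(x,E) ≤ 1, 0 ≤ P_pfa(x,E) ≤ 1, and P_ca(x,X) + P_pfa(x,X) = 1, so P_ca and P_pfa are sub-Markov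 kernels. -/
open MeasureTheory Set

section YH

variable {X : Type*} {μ : Set X → ℝ}

lemma IsNNFA.mono (hμ : IsNNFA μ) {A B : Set X} (h : A ⊆ B) : μ A ≤ μ B := by
  have := hμ.1.2 A (B \ A) disjoint_sdiff_right
  rw [union_diff_cancel h] at this
  have := hμ.2 (B \ A)
  linarith

/-- The set of sums of countable covers of `E`. -/
def coverSums (μ : Set X → ℝ) (E : Set X) : Set ℝ :=
  {r | ∃ c : ℕ → Set X, (E ⊆ ⋃ n, c n) ∧ HasSum (fun n => μ (c n)) r}

/-- The countably additive part. -/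
noncomputable def lam (μ : Set X → ℝ) (E : Set X) : ℝ := sInf (coverSums μ E)

lemma mu_mem_coverSums (hμ : IsNNFA μ) (E : Set X) : μ E ∈ coverSums μ E := by
  refine ⟨fun n => if n = 0 then E else ∅, ?_, ?_⟩
  · intro x hx; exact mem_iUnion.2 ⟨0, by simp [hx]⟩
  · have : (fun n : ℕ => μ (if n = 0 then E else ∅)) =
        fun n : ℕ => if n = 0 then μ E else 0 := by
      funext n; split_ifs <;> simp [hμ.1.1]
    rw [this]; exact hasSum_ite_eq 0 (μ E)

lemma coverSums_nonneg (hμ : IsNNFA μ) {E : Set X} {r : ℝ} (hr : r ∈ coverSums μ E) :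
    0 ≤ r := by
  obtain ⟨c, -, hs⟩ := hr
  exact hasSum_le (fun n => hμ.2 (c n)) hasSum_zero hs

lemma coverSums_bddBelow (hμ : IsNNFA μ) (E : Set X) : BddBelow (coverSums μ E) :=
  ⟨0, fun r hr => coverSums_nonneg hμ hr⟩

lemma lam_nonneg (hμ : IsNNFA μ) (E : Set X) : 0 ≤ lam μ E :=
  le_csInf ⟨μ E, mu_mem_coverSums hμ E⟩ (fun r hr => coverSums_nonneg hμ hr)

lemma lam_le_mu (hμ : IsNNFA μ) (E : Set X) : lam μ E ≤ μ E :=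
  csInf_le (coverSums_bddBelow hμ E) (mu_mem_coverSums hμ E)

lemma lam_empty (hμ : IsNNFA μ) : lam μ (∅ : Set X) = 0 :=
  le_antisymm (by simpa [hμ.1.1] using lam_le_mu hμ ∅) (lam_nonneg hμ ∅)

lemma lam_mono (hμ : IsNNFA μ) {A B : Set X} (h : A ⊆ B) : lam μ A ≤ lam μ B :=
  csInf_le_csInf (coverSums_bddBelow hμ A) ⟨μ B, mu_mem_coverSums hμ B⟩
    (fun r ⟨c, hc, hs⟩ => ⟨c, h.trans hc, hs⟩)

set_option maxHeartbeats 1000000 in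
/-- Countable subadditivity of `lam`. -/
lemma lam_iUnion_le (hμ : IsNNFA μ) (D : ℕ → Set X)
    (hsum : Summable fun n => lam μ (D n)) :
    lam μ (⋃ n, D n) ≤ ∑' n, lam μ (D n) := by
  refine le_of_forall_pos_le_add (fun ε hε => ?_)
  -- choose near-optimal covers
  have hchoice : ∀ n : ℕ, ∃ r ∈ coverSums μ (D n), r < lam μ (D n) + ε / 2 / 2 ^ n :=
    fun n => Real.lt_sInf_add_pos ⟨μ (D n), mu_mem_coverSums hμ (D n)⟩
      (by positivity)
  choose r hrmem hrlt using hchoice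
  choose c hc hs using hrmem
  set f : ℕ × ℕ → ℝ := fun p => μ (c p.1 p.2) with hf
  have hf0 : ∀ p, 0 ≤ f p := fun p => hμ.2 _
  have hrows : ∀ n, Summable fun k => f (n, k) := fun n => (hs n).summable
  have hrowsum : ∀ n, (∑' k, f (n, k)) = r n := fun n => (hs n).tsum_eq
  have hrsummable : Summable r := by
    refine Summable.of_nonneg_of_le (fun n => coverSums_nonneg hμ ⟨c n, hc n, hs n⟩)
      (fun n => (hrlt n).le) (hsum.add ?_)
    simpa using (summable_geometric_two' ε)
  have hfs : Summable f := by
    refine (summable_prod_of_nonneg hf0).2 ⟨hrows, ?_⟩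
    simpa only [hrowsum] using hrsummable
  have htsumf : ∑' p, f p = ∑' n, r n := by
    rw [Summable.tsum_prod' hfs hrows]; exact tsum_congr hrowsum
  -- the combined cover
  set e : ℕ ≃ ℕ × ℕ := (Denumerable.eqv (ℕ × ℕ)).symm with he
  have hmem : (∑' p, f p) ∈ coverSums μ (⋃ n, D n) := by
    refine ⟨fun m => c (e m).1 (e m).2, ?_, ?_⟩
    · intro x hx
      obtain ⟨n, hn⟩ := mem_iUnion.1 hx
      obtain ⟨k, hk⟩ := mem_iUnion.1 (hc n hn)
      exact mem_iUnion.2 ⟨e.symm (n, k), by simpa using hk⟩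
    · exact (Equiv.hasSum_iff e).2 hfs.hasSum
  have h1 : lam μ (⋃ n, D n) ≤ ∑' n, r n := by
    rw [← htsumf]; exact csInf_le (coverSums_bddBelow hμ _) hmem
  have h2 : (∑' n, r n) ≤ ∑' n, (lam μ (D n) + ε / 2 / 2 ^ n) :=
    Summable.tsum_le_tsum (fun n => (hrlt n).le) hrsummable
      (hsum.add (by simpa using summable_geometric_two' ε))
  have h3 : (∑' n, (lam μ (D n) + ε / 2 / 2 ^ n)) = (∑' n, lam μ (D n)) + ε := by
    rw [Summable.tsum_add hsum (by simpa using summable_geometric_two' ε),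
      tsum_geometric_two' ε]
  linarith

/-- Superadditivity on disjoint sets. -/
lemma lam_superadd (hμ : IsNNFA μ) {A B : Set X} (hAB : Disjoint A B) :
    lam μ A + lam μ B ≤ lam μ (A ∪ B) := by
  refine le_csInf ⟨μ (A ∪ B), mu_mem_coverSums hμ _⟩ ?_
  rintro r ⟨c, hc, hs⟩
  have hA : Summable fun n => μ (c n ∩ A) :=
    Summable.of_nonneg_of_le (fun n => hμ.2 _)
      (fun n => hμ.mono inter_subset_left) hs.summable
  have hB : Summable fun n => μ (c n ∩ B) :=
    Summable.of_nonneg_of_le (fun n => hμ.2 _)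
      (fun n => hμ.mono inter_subset_left) hs.summable
  have hlA : lam μ A ≤ ∑' n, μ (c n ∩ A) := by
    refine csInf_le (coverSums_bddBelow hμ A) ⟨fun n => c n ∩ A, ?_, hA.hasSum⟩
    intro x hx
    obtain ⟨n, hn⟩ := mem_iUnion.1 (hc (Or.inl hx))
    exact mem_iUnion.2 ⟨n, hn, hx⟩
  have hlB : lam μ B ≤ ∑' n, μ (c n ∩ B) := by
    refine csInf_le (coverSums_bddBelow hμ B) ⟨fun n => c n ∩ B, ?_, hB.hasSum⟩
    intro x hx
    obtain ⟨n, hn⟩ := mem_iUnion.1 (hc (Or.inr hx))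
    exact mem_iUnion.2 ⟨n, hn, hx⟩
  have hpt : ∀ n, μ (c n ∩ A) + μ (c n ∩ B) ≤ μ (c n) := by
    intro n
    have hdisj : Disjoint (c n ∩ A) (c n ∩ B) :=
      (hAB.mono inter_subset_right inter_subset_right)
    rw [← hμ.1.2 _ _ hdisj]
    exact hμ.mono (union_subset inter_subset_left inter_subset_left)
  have : (∑' n, μ (c n ∩ A)) + (∑' n, μ (c n ∩ B)) ≤ r := by
    rw [← hs.tsum_eq, ← Summable.tsum_add hA hB]
    exact Summable.tsum_le_tsum hpt (hA.add hB) hs.summable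
  linarith

lemma lam_union (hμ : IsNNFA μ) {A B : Set X} (hAB : Disjoint A B) :
    lam μ (A ∪ B) = lam μ A + lam μ B := by
  refine le_antisymm ?_ (lam_superadd hμ hAB)
  set D : ℕ → Set X := fun n => if n = 0 then A else if n = 1 then B else ∅ with hD
  have hDzero : ∀ n ∉ ({0, 1} : Finset ℕ), lam μ (D n) = 0 := by
    intro n hn
    simp only [Finset.mem_insert, Finset.mem_singleton, not_or] at hn
    simp [hD, hn.1, hn.2, lam_empty hμ]
  have hsum : Summable fun n => lam μ (D n) := summable_of_ne_finset_zero hDzero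
  have h1 : A ∪ B ⊆ ⋃ n, D n := by
    rintro x (hx | hx)
    · exact mem_iUnion.2 ⟨0, by simp [hD, hx]⟩
    · exact mem_iUnion.2 ⟨1, by simp [hD, hx]⟩
  calc lam μ (A ∪ B) ≤ lam μ (⋃ n, D n) := lam_mono hμ h1
    _ ≤ ∑' n, lam μ (D n) := lam_iUnion_le hμ D hsum
    _ = lam μ A + lam μ B := by
        rw [tsum_eq_sum hDzero]
        simp [hD, Finset.sum_pair (by norm_num : (0:ℕ) ≠ 1)]

lemma lam_nnfa (hμ : IsNNFA μ) : IsNNFA (lam μ) :=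
  ⟨⟨lam_empty hμ, fun A B h => lam_union hμ h⟩, lam_nonneg hμ⟩

lemma lam_ca (hμ : IsNNFA μ) : IsCA (lam μ) := by
  refine ⟨lam_nnfa hμ, fun E hE => ?_⟩
  have hfin : ∀ N : ℕ, ∑ n ∈ Finset.range N, lam μ (E n) = lam μ (⋃ n < N, E n) := by
    intro N
    induction N with
    | zero => simp [lam_empty hμ]
    | succ N ih =>
      rw [Finset.sum_range_succ, ih, biUnion_lt_succ, ← lam_union hμ]
      exact disjoint_iUnion₂_left.2 fun n hn => hE (Nat.ne_of_lt hn)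
  have hbound : ∀ N : ℕ, ∑ n ∈ Finset.range N, lam μ (E n) ≤ lam μ (⋃ n, E n) := by
    intro N
    rw [hfin N]
    exact lam_mono hμ (iUnion₂_subset fun n _ => subset_iUnion E n)
  have hsum : Summable fun n => lam μ (E n) :=
    summable_of_sum_range_le (fun n => lam_nonneg hμ _) hbound
  have h1 : (∑' n, lam μ (E n)) ≤ lam μ (⋃ n, E n) :=
    Summable.tsum_le_of_sum_range_le hsum hbound
  have h2 : lam μ (⋃ n, E n) ≤ ∑' n, lam μ (E n) := lam_iUnion_le hμ E hsum
  have := le_antisymm h1 h2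
  rw [← this]
  exact hsum.hasSum

/-- Maximality: any CA measure dominated by μ is dominated by lam μ. -/
lemma ca_le_lam (hμ : IsNNFA μ) {κ : Set X → ℝ} (hκ : IsCA κ)
    (hle : ∀ E, κ E ≤ μ E) (E : Set X) : κ E ≤ lam μ E := by
  refine le_csInf ⟨μ E, mu_mem_coverSums hμ E⟩ ?_
  rintro r ⟨c, hc, hs⟩
  have hd := hκ.2 (disjointed c) (disjoint_disjointed c)
  rw [iUnion_disjointed] at hd
  have h1 : κ E ≤ κ (⋃ n, c n) := hκ.1.mono hc
  have h2 : κ (⋃ n, c n) ≤ r := by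
    rw [← hd.tsum_eq, ← hs.tsum_eq]
    exact Summable.tsum_le_tsum
      (fun n => (hκ.1.mono (disjointed_subset c n)).trans (hle (c n)))
      hd.summable hs.summable
  linarith

/-- The purely finitely additive part. -/
noncomputable def rho (μ : Set X → ℝ) (E : Set X) : ℝ := μ E - lam μ E

lemma rho_nnfa (hμ : IsNNFA μ) : IsNNFA (rho μ) := by
  refine ⟨⟨by simp [rho, hμ.1.1, lam_empty hμ], fun A B h => ?_⟩,
    fun E => sub_nonneg.2 (lam_le_mu hμ E)⟩
  simp only [rho, hμ.1.2 A B h, lam_union hμ h]; ring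

lemma rho_pfa (hμ : IsNNFA μ) : IsPFA (rho μ) := by
  refine ⟨rho_nnfa hμ, fun ν hν hle => ?_⟩
  have hsum : IsCA (fun E => ν E + lam μ E) := by
    refine ⟨⟨⟨by simp only []; rw [hν.1.1.1, lam_empty hμ]; ring, fun A B h => by
      simp only []; rw [hν.1.1.2 A B h, lam_union hμ h]; ring⟩,
      fun E => add_nonneg (hν.1.2 E) (lam_nonneg hμ E)⟩, fun E hE => ?_⟩
    exact (hν.2 E hE).add ((lam_ca hμ).2 E hE)
  have hdom : ∀ E, ν E + lam μ E ≤ μ E := fun E => by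
    have := hle E; simp only [rho] at this; linarith
  have hmax : ∀ E, ν E + lam μ E ≤ lam μ E := ca_le_lam hμ hsum hdom
  funext E
  exact le_antisymm (by have := hmax E; simpa using this) (hν.1.2 E)

end YH

/-- decomposition of a finitely additive Markov kernel into a countably
additive sub-Markov kernel and a purely finitely additive sub-Markov kernel,
uniquely, with the stated bounds. -/
theorem markov_kernel_decomposition {X : Type*}
    (P : X → Set X → ℝ)
    (hker : ∀ x : X, IsNNFA (P x) ∧ P x Set.univ = 1) :
    ∃ Pca Ppfa : X → Set X → ℝ,
      (∀ x : X, IsCA (Pca x) ∧ IsPFA (Ppfa x) ∧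
        ∀ E : Set X, P x E = Pca x E + Ppfa x E) ∧
      (∀ Qca Qpfa : X → Set X → ℝ,
        (∀ x : X, IsCA (Qca x) ∧ IsPFA (Qpfa x) ∧
          ∀ E : Set X, P x E = Qca x E + Qpfa x E) →
        Qca = Pca ∧ Qpfa = Ppfa) ∧
      (∀ (x : X) (E : Set X),
        0 ≤ Pca x E ∧ Pca x E ≤ 1 ∧ 0 ≤ Ppfa x E ∧ Ppfa x E ≤ 1) ∧
      (∀ x : X, Pca x Set.univ + Ppfa x Set.univ = 1) := by
  refine ⟨fun x => lam (P x), fun x => rho (P x), ?_, ?_, ?_, ?_⟩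
  · intro x
    exact ⟨lam_ca (hker x).1, rho_pfa (hker x).1, fun E => by simp [rho]⟩
  · intro Qca Qpfa hq
    have key : ∀ x E, Qca x E = lam (P x) E := by
      intro x
      obtain ⟨hQca, hQpfa, hdec⟩ := hq x
      have hμ := (hker x).1
      have hκle : ∀ E, Qca x E ≤ P x E := fun E => by
        have := hQpfa.1.2 E; rw [hdec E]; linarith
      have hκlam : ∀ E, Qca x E ≤ lam (P x) E := ca_le_lam hμ hQca hκle
      set ν : Set X → ℝ := fun E => lam (P x) E - Qca x E with hν
      have hνca : IsCA ν := by
        refine ⟨⟨⟨(by simp only [hν]; rw [lam_empty hμ, hQca.1.1.1]; ring),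
          fun A B h => (by
            simp only [hν]
            rw [lam_union hμ h, hQca.1.1.2 A B h]; ring)⟩,
          fun E => sub_nonneg.2 (hκlam E)⟩, fun E hE => ?_⟩
        exact ((lam_ca hμ).2 E hE).sub (hQca.2 E hE)
      have hνle : ∀ E, ν E ≤ Qpfa x E := fun E => by
        have h1 := lam_le_mu hμ E
        rw [hdec E] at h1
        simp only [hν]; linarith
      have := hQpfa.2 ν hνca hνle
      intro E
      have := congrFun this E
      simp only [hν, Pi.zero_apply] at this
      linarith
    constructor
    · funext x E; exact key x E
    · funext x E
      have hdec := (hq x).2.2 E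
      have := key x E
      simp only [rho]; linarith
  · intro x E
    have hμ := (hker x).1
    have hle1 : P x E ≤ 1 := by
      rw [← (hker x).2]; exact hμ.mono (subset_univ E)
    refine ⟨lam_nonneg hμ E, (lam_le_mu hμ E).trans hle1,
      sub_nonneg.2 (lam_le_mu hμ E), ?_⟩
    have := lam_nonneg hμ E
    simp only [rho]; linarith
  · intro x
    simp only [rho]
    rw [(hker x).2]; ring
end

section
/- Let X be a set with the Ulam property, let P be a purely finitely additive sub-Markov kernel on X, and let μ be a finite measure on the measurable space (X, ⊤). Define η(E) = ∫_X P(x,E) μ(dx) for E ⊆ X (Lebesgue integral; the integrand is bounded and measurable since the σ-algebra is the power set). Then η is a nonnegative finitely additive measure on X that is purely finitely additive. (This is the inclusion A[ca(X)] ⊆ pfa(X) for the Markov operator A generated by a purely finitely additive kernel.) -/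
open MeasureTheory Set

theorem nnfa_mono {X : Type*} {lam : Set X → ℝ} (h : IsNNFA lam)
    {A B : Set X} (hAB : A ⊆ B) : lam A ≤ lam B := by
  have hdec : A ∪ (B \ A) = B := Set.union_diff_cancel hAB
  have := h.1.2 A (B \ A) disjoint_sdiff_self_right
  rw [hdec] at this
  linarith [h.2 (B \ A)]

/-- A purely finitely additive measure vanishes on singletons. -/
theorem pfa_singleton {X : Type*} {lam : Set X → ℝ} (h : IsPFA lam) (y : X) :
    lam {y} = 0 := by
  set ν : Set X → ℝ := fun E => lam (E ∩ {y}) with hν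
  have hemp : ν ∅ = 0 := by simp only [hν, Set.empty_inter]; exact h.1.1.1
  have hCA : IsCA ν := by
    refine ⟨⟨⟨hemp, ?_⟩, fun E => h.1.2 _⟩, ?_⟩
    · intro A B hAB
      have hd : Disjoint (A ∩ {y}) (B ∩ {y}) :=
        hAB.mono Set.inter_subset_left Set.inter_subset_left
      simp only [hν, Set.union_inter_distrib_right]
      exact h.1.1.2 _ _ hd
    · intro E hE
      by_cases hy : y ∈ ⋃ n, E n
      · obtain ⟨m, hm⟩ := Set.mem_iUnion.mp hy
        have heq : ∀ n, ν (E n) = if n = m then lam {y} else 0 := by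
          intro n
          by_cases hnm : n = m
          · subst hnm
            simp [hν, Set.inter_eq_right.mpr (Set.singleton_subset_iff.mpr hm)]
          · have : E n ∩ {y} = ∅ := by
              ext z
              simp only [Set.mem_inter_iff, Set.mem_singleton_iff, Set.mem_empty_iff_false,
                iff_false, not_and]
              intro hz hzy
              subst hzy
              exact Set.disjoint_left.mp (hE hnm) hz hm
            simp only [hν, this, h.1.1.1, if_neg hnm]
        have htgt : ν (⋃ n, E n) = lam {y} := by
          simp only [hν, Set.inter_eq_right.mpr (Set.singleton_subset_iff.mpr hy)]
        rw [htgt]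
        have := hasSum_ite_eq m (lam {y})
        exact this.congr_fun fun n => (heq n).symm ▸ rfl
      · have heq : ∀ n, ν (E n) = 0 := by
          intro n
          have : E n ∩ {y} = ∅ := by
            ext z
            simp only [Set.mem_inter_iff, Set.mem_singleton_iff, Set.mem_empty_iff_false,
              iff_false, not_and]
            intro hz hzy
            exact hy (Set.mem_iUnion.mpr ⟨n, hzy ▸ hz⟩)
          simp [hν, this, h.1.1.1]
        have htgt : ν (⋃ n, E n) = 0 := by
          have : (⋃ n, E n) ∩ {y} = ∅ := by
            ext z
            simp only [Set.mem_inter_iff, Set.mem_singleton_iff, Set.mem_empty_iff_false,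
              iff_false, not_and]
            intro hz hzy
            exact hy (hzy ▸ hz)
          simp [hν, this, h.1.1.1]
        rw [htgt]
        exact hasSum_zero.congr_fun heq
  have hdom : ∀ E : Set X, ν E ≤ lam E := fun E => nnfa_mono h.1 Set.inter_subset_left
  have := h.2 ν hCA hdom
  have h0 : ν {y} = 0 := by rw [this]; rfl
  simpa [hν, Set.inter_self] using h0

/-- on a set with the Ulam property, the Markov operator generated by a
purely finitely additive sub-Markov kernel maps every finite countably additive measure
to a purely finitely additive measure: η(E) = ∫ P(x,E) dμ is purely finitely additive. -/
theorem image_of_ca_measure_is_pfa {X : Type*} (hU : UlamProperty X)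
    (P : X → Set X → ℝ)
    (hker : ∀ x : X, IsPFA (P x) ∧ P x Set.univ ≤ 1)
    (μ : @MeasureTheory.Measure X ⊤) (hfin : μ Set.univ ≠ ⊤) :
    IsPFA (fun E : Set X => ∫ x, P x E ∂μ) := by
  haveI : IsFiniteMeasure μ := ⟨hfin.lt_top⟩
  have hint : ∀ E : Set X, Integrable (fun x => P x E) μ := by
    intro E
    refine Integrable.mono' (integrable_const (1 : ℝ)) ?_ ?_
    · exact (measurable_from_top (f := fun x => P x E)).aestronglyMeasurable
    · filter_upwards with x
      rw [Real.norm_eq_abs, abs_le]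
      constructor
      · linarith [(hker x).1.1.2 E]
      · exact le_trans (nnfa_mono (hker x).1.1 (Set.subset_univ E)) (hker x).2
  have hNNFA : IsNNFA (fun E : Set X => ∫ x, P x E ∂μ) := by
    refine ⟨⟨?_, ?_⟩, ?_⟩
    · have : (fun x => P x (∅ : Set X)) = fun _ => 0 := funext fun x => (hker x).1.1.1.1
      simp only [this, integral_zero]
    · intro A B hAB
      have : (fun x => P x (A ∪ B)) = fun x => P x A + P x B :=
        funext fun x => (hker x).1.1.1.2 A B hAB
      simp only [this]
      exact integral_add (hint A) (hint B)
    · exact fun E => integral_nonneg fun x => (hker x).1.1.2 E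
  refine ⟨hNNFA, ?_⟩
  intro ν hν hdom
  apply hU ν hν
  intro y
  have hη : (∫ x, P x {y} ∂μ) = 0 := by
    have : (fun x => P x ({y} : Set X)) = fun _ => 0 :=
      funext fun x => pfa_singleton (hker x).1 y
    simp only [this, integral_zero]
  exact le_antisymm (hη ▸ hdom {y}) (hν.1.2 {y})
end
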